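/- Let (Z^(i), R^(i)), i = 1, 2, ..., be i.i.d. copies of (Z, R), fix j ∈ Fin d, suppose Z_j is integrable and P(R_j = 1) > 0, and let q : ℝ^d → [0, 1] be a measurable function such that q(Z) is a version of the conditional probability E[1_{R_j = 1} | σ(Z)]. Define π_j^N := N^{-1} Σ_{i ≤ N} q(Z^(i)) and μ̂_j^N := (N π_j^N)^{-1} Σ_{i ≤ N} Z^(i)_j q(Z^(i)) (defined arbitrarily when π_j^N = 0). Then π_j^N converges almost surely to P(R_j = 1), and μ̂_j^N is a consistent estimator of the conditional mean of the j-th feature: μ̂_j^N converges almost surely, as N → ∞, to E[Z_j | R_j = 1]. -/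

import Mathlib

open MeasureTheory ProbabilityTheory Filter Topology

/-!
Both estimators are ratios of empirical means of functions of the i.i.d. sample, so the strong
law of large numbers makes them converge to `E[q(Z)]` and `E[Z_j q(Z)]`. Since `q(Z)` is
`E[1_{R_j = 1} | Z]` and `Z_j` is `σ(Z)`-measurable, pulling `Z_j` out of the conditional
expectation turns these into `P(R_j = 1)` and `E[Z_j 1_{R_j = 1}]`.
-/

theorem integral_mul_eq_of_ae_eq_condExp {Ω : Type*} {m mΩ : MeasurableSpace Ω}
    {μ : Measure Ω} (hm : m ≤ mΩ) [SigmaFinite (μ.trim hm)] {f g h : Ω → ℝ}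
    (hf : StronglyMeasurable[m] f) (hfg : Integrable (f * g) μ) (hg : Integrable g μ)
    (hh : h =ᵐ[μ] μ[g | m]) :
    ∫ ω, f ω * h ω ∂μ = ∫ ω, f ω * g ω ∂μ :=
  calc ∫ ω, f ω * h ω ∂μ = ∫ ω, μ[f * g | m] ω ∂μ := integral_congr_ae <| by
        filter_upwards [hh, condExp_mul_of_stronglyMeasurable_left hf hfg hg] with ω h₁ h₂
        rw [h₂, Pi.mul_apply, h₁]
    _ = ∫ ω, f ω * g ω ∂μ := integral_condExp hm

theorem integral_mul_eq_of_ae_eq_condExp_comap {Ω β : Type*} [MeasurableSpace Ω]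
    [MeasurableSpace β] {μ : Measure Ω} [IsFiniteMeasure μ] {Z : Ω → β} (hZ : Measurable Z)
    {f q : β → ℝ} (hf : Measurable f) (hfZ : Integrable (fun ω => f (Z ω)) μ) {s : Set Ω}
    (hs : MeasurableSet s)
    (hq : (fun ω => q (Z ω)) =ᵐ[μ]
      μ[s.indicator fun _ => (1 : ℝ) | MeasurableSpace.comap Z inferInstance]) :
    ∫ ω, f (Z ω) * q (Z ω) ∂μ = ∫ ω, f (Z ω) * s.indicator (fun _ => (1 : ℝ)) ω ∂μ := by
  have hfs : Integrable (fun ω => f (Z ω) * s.indicator (fun _ => (1 : ℝ)) ω) μ := by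
    refine (hfZ.indicator hs).congr (ae_of_all _ fun ω => ?_)
    by_cases hω : ω ∈ s <;> simp [hω]
  exact integral_mul_eq_of_ae_eq_condExp hZ.comap_le
    (hf.comp (comap_measurable Z)).stronglyMeasurable hfs ((integrable_const 1).indicator hs) hq

theorem strong_law_ae_comp {Ω α : Type*} [MeasurableSpace Ω] [MeasurableSpace α]
    {μ : Measure Ω} {X : ℕ → Ω → α} {Y : Ω → α}
    (hindep : Pairwise fun i k => IndepFun (X i) (X k) μ)
    (hident : ∀ i, IdentDistrib (X i) Y μ μ) {φ : α → ℝ} (hφ : Measurable φ)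
    (hint : Integrable (fun ω => φ (Y ω)) μ) :
    ∀ᵐ ω ∂μ, Tendsto (fun N : ℕ => (N : ℝ)⁻¹ * ∑ i ∈ Finset.range N, φ (X i ω)) atTop
      (𝓝 (∫ ω, φ (Y ω) ∂μ)) := by
  have hidentφ (i : ℕ) : IdentDistrib (φ ∘ X i) (φ ∘ Y) μ μ := (hident i).comp hφ
  have hlaw := strong_law_ae_real (fun i => φ ∘ X i) ((hidentφ 0).integrable_iff.2 hint)
    (fun i k hik => (hindep hik).comp hφ hφ) (fun i => (hidentφ i).trans (hidentφ 0).symm)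
  rw [(hidentφ 0).integral_eq] at hlaw
  filter_upwards [hlaw] with ω hω
  simpa only [div_eq_inv_mul, Function.comp_apply] using hω

theorem tendsto_inv_mul_of_tendsto_mean {S T : ℕ → ℝ} {a b : ℝ} (ha : a ≠ 0)
    (hS : Tendsto (fun N : ℕ => (N : ℝ)⁻¹ * S N) atTop (𝓝 a))
    (hT : Tendsto (fun N : ℕ => (N : ℝ)⁻¹ * T N) atTop (𝓝 b)) :
    Tendsto (fun N : ℕ => ((N : ℝ) * ((N : ℝ)⁻¹ * S N))⁻¹ * T N) atTop (𝓝 (a⁻¹ * b)) := by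
  refine ((hS.inv₀ ha).mul hT).congr fun N => ?_
  rw [mul_inv]
  ring

theorem stmt_4_general {Ω : Type*} [MeasurableSpace Ω] (P : Measure Ω) [IsProbabilityMeasure P]
    {d : ℕ} (Z : Ω → (Fin d → ℝ)) (R : Ω → (Fin d → Bool))
    (hZ : Measurable Z) (hR : Measurable R)
    (ZR : ℕ → Ω → ((Fin d → ℝ) × (Fin d → Bool)))
    (hindep : iIndepFun ZR P)
    (hident : ∀ i, IdentDistrib (ZR i) (fun ω => (Z ω, R ω)) P P)
    (j : Fin d)
    (hint : Integrable (fun ω => Z ω j) P)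
    (hpos : 0 < P {ω | R ω j = true})
    (q : (Fin d → ℝ) → ℝ) (hq_meas : Measurable q)
    (hq01 : ∀ z, q z ∈ Set.Icc (0 : ℝ) 1)
    (hq : (fun ω => q (Z ω)) =ᵐ[P]
      P[Set.indicator {ω | R ω j = true} (fun _ => (1 : ℝ)) |
        MeasurableSpace.comap Z inferInstance]) :
    (∀ᵐ ω ∂P, Tendsto (fun N : ℕ => (N : ℝ)⁻¹ * ∑ i ∈ Finset.range N, q ((ZR i ω).1)) atTop
        (nhds (P {ω | R ω j = true}).toReal))
    ∧
    (∀ᵐ ω ∂P, Tendsto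
        (fun N : ℕ => ((N : ℝ) * ((N : ℝ)⁻¹ * ∑ i ∈ Finset.range N, q ((ZR i ω).1)))⁻¹ *
          ∑ i ∈ Finset.range N, (ZR i ω).1 j * q ((ZR i ω).1)) atTop
        (nhds ((P {ω | R ω j = true}).toReal⁻¹ *
          ∫ ω, Z ω j * Set.indicator {ω | R ω j = true} (fun _ => (1 : ℝ)) ω ∂P))) := by
  set A := {ω | R ω j = true}
  have hA : MeasurableSet A := (measurable_pi_apply j).comp hR (measurableSet_singleton true)
  have hq_bdd : ∀ᵐ ω ∂P, ‖q (Z ω)‖ ≤ 1 := ae_of_all _ fun ω => by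
    rw [Real.norm_eq_abs, abs_le]
    exact ⟨by linarith [(hq01 (Z ω)).1], (hq01 (Z ω)).2⟩
  have hq_sm : AEStronglyMeasurable (fun ω => q (Z ω)) P :=
    (hq_meas.comp hZ).aestronglyMeasurable
  have hπ_mean : ∫ ω, q (Z ω) ∂P = (P A).toReal := by
    have h := integral_mul_eq_of_ae_eq_condExp_comap hZ (f := fun _ => 1) measurable_const
      (integrable_const 1) hA hq
    simp only [one_mul] at h
    exact h.trans (integral_indicator_one hA)
  have hμ_mean : ∫ ω, Z ω j * q (Z ω) ∂P = ∫ ω, Z ω j * A.indicator (fun _ => (1 : ℝ)) ω ∂P :=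
    integral_mul_eq_of_ae_eq_condExp_comap hZ (measurable_pi_apply j) hint hA hq
  have hpairwise : Pairwise fun i k => IndepFun (ZR i) (ZR k) P :=
    fun i k hik => hindep.indepFun hik
  have hπ : ∀ᵐ ω ∂P, Tendsto (fun N : ℕ => (N : ℝ)⁻¹ * ∑ i ∈ Finset.range N, q ((ZR i ω).1))
      atTop (𝓝 (P A).toReal) := by
    rw [← hπ_mean]
    exact strong_law_ae_comp (φ := fun z => q z.1) hpairwise hident (hq_meas.comp measurable_fst)
      (.of_bound hq_sm 1 hq_bdd)
  have hμ : ∀ᵐ ω ∂P, Tendsto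
      (fun N : ℕ => (N : ℝ)⁻¹ * ∑ i ∈ Finset.range N, (ZR i ω).1 j * q ((ZR i ω).1))
      atTop (𝓝 (∫ ω, Z ω j * A.indicator (fun _ => (1 : ℝ)) ω ∂P)) := by
    rw [← hμ_mean]
    exact strong_law_ae_comp (φ := fun z => z.1 j * q z.1) hpairwise hident
      (((measurable_pi_apply j).comp measurable_fst).mul (hq_meas.comp measurable_fst))
      (hint.mul_bdd hq_sm hq_bdd)
  refine ⟨hπ, ?_⟩
  filter_upwards [hπ, hμ] with ω hπω hμω
  exact tendsto_inv_mul_of_tendsto_mean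
    (ENNReal.toReal_pos hpos.ne' (measure_ne_top P A)).ne' hπω hμω

/-- Consistency of the missingness-weighted estimators: with `q(Z)` a version of the conditional
probability `P(R_j = 1 | Z)`, the empirical observation probability
`π_j^N = N⁻¹ Σ_{i ≤ N} q(Z^(i))` converges almost surely to `P(R_j = 1)`, and the weighted
estimator `μ̂_j^N = (N π_j^N)⁻¹ Σ_{i ≤ N} Z^(i)_j q(Z^(i))` converges almost surely to the
conditional mean `E[Z_j | R_j = 1]`. -/
theorem stmt_4 {Ω : Type*} [MeasurableSpace Ω] (P : Measure Ω) [IsProbabilityMeasure P]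
    {d : ℕ} (Z : Ω → (Fin d → ℝ)) (R : Ω → (Fin d → Bool))
    (hZ : Measurable Z) (hR : Measurable R)
    (ZR : ℕ → Ω → ((Fin d → ℝ) × (Fin d → Bool)))
    (hmeas : ∀ i, Measurable (ZR i))
    (hindep : iIndepFun ZR P)
    (hident : ∀ i, IdentDistrib (ZR i) (fun ω => (Z ω, R ω)) P P)
    (j : Fin d)
    (hint : Integrable (fun ω => Z ω j) P)
    (hpos : 0 < P {ω | R ω j = true})
    (q : (Fin d → ℝ) → ℝ) (hq_meas : Measurable q)
    (hq01 : ∀ z, q z ∈ Set.Icc (0 : ℝ) 1)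
    (hq : (fun ω => q (Z ω)) =ᵐ[P]
      P[Set.indicator {ω | R ω j = true} (fun _ => (1 : ℝ)) |
        MeasurableSpace.comap Z inferInstance]) :
    (∀ᵐ ω ∂P, Tendsto (fun N : ℕ => (N : ℝ)⁻¹ * ∑ i ∈ Finset.range N, q ((ZR i ω).1)) atTop
        (nhds (P {ω | R ω j = true}).toReal))
    ∧
    (∀ᵐ ω ∂P, Tendsto
        (fun N : ℕ => ((N : ℝ) * ((N : ℝ)⁻¹ * ∑ i ∈ Finset.range N, q ((ZR i ω).1)))⁻¹ *
          ∑ i ∈ Finset.range N, (ZR i ω).1 j * q ((ZR i ω).1)) atTop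
        (nhds ((P {ω | R ω j = true}).toReal⁻¹ *
          ∫ ω, Z ω j * Set.indicator {ω | R ω j = true} (fun _ => (1 : ℝ)) ω ∂P))) :=
  stmt_4_general P Z R hZ hR ZR hindep hident j hint hpos q hq_meas hq01 hq
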